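/- The map t ↦ (x(t) : y(t) : z(t)) with x = (t^3+2)(t^6+3t^3+3), y = t(t^3+1)(t^3+2)(t^3+3), z = t^9+3t^6-3 is generically injective: there is a finite subset S of ℂ such that for all s, t outside S, if (x(s):y(s):z(s)) = (x(t):y(t):z(t)) as points of the projective plane then s = t. -/
import Mathlib

open Polynomial

noncomputable def qpoly : Polynomial ℂ :=
  (((X:Polynomial ℂ)^3+2)*(X^6+3*X^3+3))^4
  + 2*(((X:Polynomial ℂ)^3+2)*(X^6+3*X^3+3))^3*(X^9+3*X^6-3)
  - (((X:Polynomial ℂ)^3+2)*(X^6+3*X^3+3))^2*(X^9+3*X^6-3)^2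
  - 2*(((X:Polynomial ℂ)^3+2)*(X^6+3*X^3+3))*(X^9+3*X^6-3)^3
  + 3*((X:Polynomial ℂ)*(X^3+1)*(X^3+2)*(X^3+3))^3*(X^9+3*X^6-3)

lemma qpoly_eval (u : ℂ) :
    qpoly.eval u =
      ((u^3+2)*(u^6+3*u^3+3))^4
      + 2*((u^3+2)*(u^6+3*u^3+3))^3*(u^9+3*u^6-3)
      - ((u^3+2)*(u^6+3*u^3+3))^2*(u^9+3*u^6-3)^2
      - 2*((u^3+2)*(u^6+3*u^3+3))*(u^9+3*u^6-3)^3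
      + 3*(u*(u^3+1)*(u^3+2)*(u^3+3))^3*(u^9+3*u^6-3) := by
  simp [qpoly]

lemma qpoly_ne_zero : qpoly ≠ 0 := by
  intro h
  have := qpoly_eval 1
  rw [h] at this
  norm_num at this

/-- The map t ↦ (x(t) : y(t) : z(t)), with
x = (t^3+2)(t^6+3t^3+3), y = t(t^3+1)(t^3+2)(t^3+3), z = t^9+3t^6-3,
is generically injective: there is a finite subset S of ℂ such that for all
s, t outside S, if the two image points agree in the projective plane (i.e.
the triples are proportional by a nonzero scalar) then s = t. -/
theorem stmt_1 :
    ∃ S : Finset ℂ, ∀ s t : ℂ, s ∉ S → t ∉ S →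
      (∃ c : ℂ, c ≠ 0 ∧
        (s^3 + 2) * (s^6 + 3*s^3 + 3) = c * ((t^3 + 2) * (t^6 + 3*t^3 + 3)) ∧
        s * (s^3 + 1) * (s^3 + 2) * (s^3 + 3)
          = c * (t * (t^3 + 1) * (t^3 + 2) * (t^3 + 3)) ∧
        s^9 + 3*s^6 - 3 = c * (t^9 + 3*t^6 - 3)) →
      s = t := by
  refine ⟨qpoly.roots.toFinset, ?_⟩
  intro s t hs ht ⟨c, hc, hx, hy, hz⟩
  set xs := (s^3 + 2) * (s^6 + 3*s^3 + 3) with hxs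
  set ys := s * (s^3 + 1) * (s^3 + 2) * (s^3 + 3) with hys
  set zs := s^9 + 3*s^6 - 3 with hzs
  set xt := (t^3 + 2) * (t^6 + 3*t^3 + 3) with hxt
  set yt := t * (t^3 + 1) * (t^3 + 2) * (t^3 + 3) with hyt
  set zt := t^9 + 3*t^6 - 3 with hzt
  have hqs : qpoly.eval s = xs^4 + 2*xs^3*zs - xs^2*zs^2 - 2*xs*zs^3 + 3*ys^3*zs := by
    rw [qpoly_eval]
  have hqt : qpoly.eval t = xt^4 + 2*xt^3*zt - xt^2*zt^2 - 2*xt*zt^3 + 3*yt^3*zt := by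
    rw [qpoly_eval]
  have hqs0 : qpoly.eval s ≠ 0 := by
    intro h
    exact hs (Multiset.mem_toFinset.2 ((mem_roots qpoly_ne_zero).2 h))
  have hqt0 : qpoly.eval t ≠ 0 := by
    intro h
    exact ht (Multiset.mem_toFinset.2 ((mem_roots qpoly_ne_zero).2 h))
  -- scaling relations for the two quartic forms
  have hQ2 : qpoly.eval s = c^4 * qpoly.eval t := by
    rw [hqs, hqt, hx, hy, hz]; ring
  have hQ1 : -3*xs^3*ys - 7*xs^2*ys*zs - xs*ys*zs^2 + 3*ys^4 + 2*ys*zs^3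
      = c^4 * (-3*xt^3*yt - 7*xt^2*yt*zt - xt*yt*zt^2 + 3*yt^4 + 2*yt*zt^3) := by
    rw [hx, hy, hz]; ring
  -- the key one-variable identity u * Q2 = Q1 along the curve
  have ids : s * qpoly.eval s
      = -3*xs^3*ys - 7*xs^2*ys*zs - xs*ys*zs^2 + 3*ys^4 + 2*ys*zs^3 := by
    rw [hqs, hxs, hys, hzs]; ring
  have idt : t * qpoly.eval t
      = -3*xt^3*yt - 7*xt^2*yt*zt - xt*yt*zt^2 + 3*yt^4 + 2*yt*zt^3 := by
    rw [hqt, hxt, hyt, hzt]; ring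
  have : s * qpoly.eval s = t * qpoly.eval s := by
    rw [ids, hQ1, ← idt, hQ2]; ring
  have := mul_right_cancel₀ hqs0 this
  exact this
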